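/- Let r, R ∈ |F^×| with r ≤ R, and let f ∈ A^m(R) be not identically zero. Then for an (m−1)-tuple u = (u_1,…,u_{m−1}) over a generic residue class, the function f∘σ_u is z_m-distinguished in A^m(r), and moreover |f∘σ_u|_r = |f|_r. -/

import Mathlib

open MvPowerSeries Filter

set_option linter.unusedSectionVars false

namespace NA

variable (F : Type) [NormedField F] [IsUltrametricDist F]

/-- The value group `|F^×|` of a normed field, as a set of real numbers. -/
def VG : Set ℝ := {r | ∃ c : F, c ≠ 0 ∧ ‖c‖ = r}

lemma VG.pos {r : ℝ} (hr : r ∈ VG F) : 0 < r := by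
  obtain ⟨c, hc, rfl⟩ := hr
  exact norm_pos_iff.mpr hc

/-- The total degree `|γ|` of a multi-index. -/
def mdeg {m : ℕ} (γ : Fin m →₀ ℕ) : ℕ := γ.sum fun _ n => n

lemma mdeg_add {m : ℕ} (α β : Fin m →₀ ℕ) : mdeg (α + β) = mdeg α + mdeg β :=
  Finsupp.sum_add_index' (fun _ => rfl) (fun _ _ _ => rfl)

/-- The ring `A^m(r)` of power series converging on the closed ball of radius `r`:
those `f = Σ a_γ z^γ` with `|a_γ| r^{|γ|} → 0` as `|γ| → ∞`. -/
def A (m : ℕ) (r : ℝ) : Subring (MvPowerSeries (Fin m) F) where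
  carrier := {f | Tendsto (fun γ : Fin m →₀ ℕ => ‖coeff γ f‖ * r ^ mdeg γ)
    cofinite (nhds 0)}
  zero_mem' := by
    simp only [Set.mem_setOf_eq, map_zero, norm_zero, zero_mul]
    exact tendsto_const_nhds
  one_mem' := by
    refine tendsto_const_nhds.congr' ?_
    refine Filter.eventuallyEq_of_mem ((Set.finite_singleton (0 : Fin m →₀ ℕ)).compl_mem_cofinite) ?_
    intro γ hγ
    have : (γ : Fin m →₀ ℕ) ≠ 0 := by simpa using hγ
    simp [MvPowerSeries.coeff_one, this]
  add_mem' := by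
    intro f g hf hg
    simp only [Set.mem_setOf_eq] at hf hg ⊢
    rw [tendsto_zero_iff_abs_tendsto_zero] at hf hg ⊢
    refine squeeze_zero (fun γ => abs_nonneg _) (fun γ => ?_) (by simpa using hf.add hg)
    simp only [Function.comp_apply, abs_mul, abs_norm, map_add, ← add_mul]
    rw [abs_pow]
    exact mul_le_mul_of_nonneg_right (norm_add_le _ _) (by positivity)
  neg_mem' := by
    intro f hf
    simpa only [Set.mem_setOf_eq, map_neg, norm_neg] using hf
  mul_mem' := by
    intro f g hf hg
    simp only [Set.mem_setOf_eq] at hf hg ⊢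
    rw [tendsto_zero_iff_abs_tendsto_zero] at hf hg ⊢
    have habs : ∀ (h : MvPowerSeries (Fin m) F),
        (abs ∘ fun γ : Fin m →₀ ℕ => ‖coeff γ h‖ * r ^ mdeg γ)
          = fun γ => ‖coeff γ h‖ * |r| ^ mdeg γ := by
      intro h; funext γ
      simp [Function.comp_apply, abs_mul, abs_pow]
    rw [habs] at hf hg ⊢
    set v := fun (h : MvPowerSeries (Fin m) F) (γ : Fin m →₀ ℕ) =>
      ‖coeff γ h‖ * |r| ^ mdeg γ with hv
    have vnonneg : ∀ h γ, 0 ≤ v h γ := fun h γ => by positivity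
    have finlt : ∀ (h : MvPowerSeries (Fin m) F),
        Tendsto (v h) cofinite (nhds 0) → ∀ δ : ℝ, 0 < δ → {γ | ¬ v h γ < δ}.Finite := by
      intro h hh δ hδ
      have := (Metric.tendsto_nhds.mp hh) δ hδ
      rw [Filter.eventually_cofinite] at this
      refine this.subset ?_
      intro γ hγ
      simp only [Set.mem_setOf_eq, Real.dist_eq, sub_zero] at *
      intro hc; exact hγ (lt_of_abs_lt hc)
    have bound : ∀ (h : MvPowerSeries (Fin m) F),
        Tendsto (v h) cofinite (nhds 0) → ∃ M : ℝ, 1 ≤ M ∧ ∀ γ, v h γ ≤ M := by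
      intro h hh
      have h1 := finlt h hh 1 one_pos
      refine ⟨1 + ∑ γ ∈ h1.toFinset, v h γ,
        le_add_of_nonneg_right (Finset.sum_nonneg fun γ _ => vnonneg h γ), ?_⟩
      intro γ
      by_cases hγ : γ ∈ h1.toFinset
      · have := Finset.single_le_sum (f := v h) (fun γ _ => vnonneg h γ) hγ
        linarith
      · simp only [Set.Finite.mem_toFinset, Set.mem_setOf_eq, not_not] at hγ
        have hs : (0:ℝ) ≤ ∑ γ ∈ h1.toFinset, v h γ :=
          Finset.sum_nonneg fun γ _ => vnonneg h γ
        linarith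
    rw [Metric.tendsto_nhds]
    intro ε hε
    rw [Filter.eventually_cofinite]
    obtain ⟨Mf, hMf1, hMf⟩ := bound f hf
    obtain ⟨Mg, hMg1, hMg⟩ := bound g hg
    set M := max Mf Mg with hMdef
    have hM1 : (1:ℝ) ≤ M := le_trans hMf1 (le_max_left _ _)
    have hM0 : (0:ℝ) < M := lt_of_lt_of_le one_pos hM1
    set δ := ε / M with hδdef
    have hδ0 : 0 < δ := div_pos hε hM0
    have hSf := finlt f hf δ hδ0
    have hSg := finlt g hg δ hδ0
    refine ((hSf.prod hSg).image
      (fun p : (Fin m →₀ ℕ) × (Fin m →₀ ℕ) => p.1 + p.2)).subset ?_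
    intro γ hγ
    simp only [Set.mem_setOf_eq, Real.dist_eq, sub_zero] at hγ
    have hγ' : ε ≤ v (f * g) γ := by
      rw [abs_of_nonneg (vnonneg (f*g) γ)] at hγ
      exact not_lt.mp hγ
    have hne : (Finset.HasAntidiagonal.antidiagonal γ).Nonempty := ⟨(γ, 0), by simp⟩
    obtain ⟨p, hp, hple⟩ := IsUltrametricDist.exists_norm_finset_sum_le_of_nonempty hne
      (fun p : (Fin m →₀ ℕ) × (Fin m →₀ ℕ) => coeff p.1 f * coeff p.2 g)
    have hpsum : p.1 + p.2 = γ := Finset.HasAntidiagonal.mem_antidiagonal.mp hp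
    have key : v (f * g) γ ≤ v f p.1 * v g p.2 := by
      have hdeg : mdeg γ = mdeg p.1 + mdeg p.2 := by
        rw [← hpsum, mdeg_add]
      calc v (f * g) γ = ‖coeff γ (f * g)‖ * |r| ^ mdeg γ := rfl
        _ ≤ ‖coeff p.1 f * coeff p.2 g‖ * |r| ^ mdeg γ := by
            refine mul_le_mul_of_nonneg_right ?_ (by positivity)
            rw [MvPowerSeries.coeff_mul]
            exact hple
        _ = (‖coeff p.1 f‖ * |r| ^ mdeg p.1) * (‖coeff p.2 g‖ * |r| ^ mdeg p.2) := by
            rw [norm_mul, hdeg, pow_add]; ring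
    refine ⟨p, ⟨?_, ?_⟩, hpsum⟩
    · simp only [Set.mem_setOf_eq, not_lt]
      have h1 : ε ≤ v f p.1 * M := by
        refine hγ'.trans (key.trans ?_)
        exact mul_le_mul_of_nonneg_left ((hMg p.2).trans (le_max_right _ _)) (vnonneg f p.1)
      exact (div_le_iff₀ hM0).mpr h1
    · simp only [Set.mem_setOf_eq, not_lt]
      have h1 : ε ≤ M * v g p.2 := by
        refine hγ'.trans (key.trans ?_)
        exact mul_le_mul_of_nonneg_right ((hMf p.1).trans (le_max_left _ _)) (vnonneg g p.2)
      rw [hδdef, div_le_iff₀' hM0]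
      exact h1

lemma mem_A_iff {m : ℕ} {r : ℝ} {f : MvPowerSeries (Fin m) F} :
    f ∈ A F m r ↔ Tendsto (fun γ : Fin m →₀ ℕ => ‖coeff γ f‖ * r ^ mdeg γ)
      cofinite (nhds 0) := ⟨fun h => h, fun h => h⟩

instance {m : ℕ} : IsDomain (MvPowerSeries (Fin m) F) :=
  NoZeroDivisors.to_isDomain _

/-- The Gauss norm `|f|_r = sup_γ |a_γ| r^{|γ|}`. -/
noncomputable def nrm (r : ℝ) {m : ℕ} (f : MvPowerSeries (Fin m) F) : ℝ :=
  ⨆ γ : Fin m →₀ ℕ, ‖coeff γ f‖ * r ^ mdeg γ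

/-- For `0 < r ≤ R`, `A^m(R) ⊆ A^m(r)`. -/
lemma A_mono {m : ℕ} {r R : ℝ} (h0 : 0 < r) (hrR : r ≤ R) : A F m R ≤ A F m r := by
  intro f hf
  rw [mem_A_iff] at hf ⊢
  refine squeeze_zero (fun γ => by positivity) (fun γ => ?_) hf
  exact mul_le_mul_of_nonneg_left (pow_le_pow_left₀ h0.le hrR _) (norm_nonneg _)

/-- Evaluation of a power series at a point, as a (possibly junk) sum. -/
noncomputable def eval {m : ℕ} (f : MvPowerSeries (Fin m) F) (z : Fin m → F) : F :=
  ∑' γ : Fin m →₀ ℕ, coeff γ f * ∏ i, z i ^ (γ i)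

/-- The ring of integers `{a : |a| ≤ 1}` of `F`. -/
def O : Subring F where
  carrier := {a | ‖a‖ ≤ 1}
  zero_mem' := by simp
  one_mem' := by simp
  add_mem' := by
    intro a b ha hb
    exact (IsUltrametricDist.norm_add_le_max a b).trans (max_le ha hb)
  neg_mem' := by intro a ha; simpa using ha
  mul_mem' := by
    intro a b ha hb
    rw [Set.mem_setOf_eq, norm_mul]
    exact mul_le_one₀ ha (norm_nonneg b) hb

/-- The maximal ideal `{a : |a| < 1}` of the ring of integers. -/
def mIdeal : Ideal (O F) where
  carrier := {a | ‖(a : F)‖ < 1}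
  zero_mem' := by simp
  add_mem' := by
    intro a b ha hb
    exact lt_of_le_of_lt (IsUltrametricDist.norm_add_le_max (a : F) b) (max_lt ha hb)
  smul_mem' := by
    intro c a ha
    simp only [Set.mem_setOf_eq, smul_eq_mul] at ha ⊢
    rw [Subring.coe_mul, norm_mul]
    exact mul_lt_one_of_nonneg_of_lt_one_right c.2 (norm_nonneg _) ha

/-- The residue class field of `F`. -/
def Res := O F ⧸ mIdeal F

noncomputable instance : CommRing (Res F) := by unfold Res; infer_instance

/-- Reduction of an element of absolute value at most `1` to the residue field. -/
noncomputable def red (a : F) (h : ‖a‖ ≤ 1) : Res F :=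
  Ideal.Quotient.mk (mIdeal F) ⟨a, h⟩

/-- The ring of entire functions on `F^m`: power series lying in every `A^m(r)`. -/
def Ent (m : ℕ) : Subring (MvPowerSeries (Fin m) F) where
  carrier := {f | ∀ r ∈ VG F, f ∈ A F m r}
  zero_mem' := fun r _ => (A F m r).zero_mem
  one_mem' := fun r _ => (A F m r).one_mem
  add_mem' := fun hf hg r hr => (A F m r).add_mem (hf r hr) (hg r hr)
  neg_mem' := fun hf r hr => (A F m r).neg_mem (hf r hr)
  mul_mem' := fun hf hg r hr => (A F m r).mul_mem (hf r hr) (hg r hr)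

lemma mem_Ent_iff {m : ℕ} {f : MvPowerSeries (Fin m) F} :
    f ∈ Ent F m ↔ ∀ r ∈ VG F, f ∈ A F m r := Iff.rfl

/-- `d` is a greatest common divisor of the family `s`. -/
def IsGCDOf {α : Type*} [CommRing α] {ι : Type*} (d : α) (s : ι → α) : Prop :=
  (∀ i, d ∣ s i) ∧ ∀ e : α, (∀ i, e ∣ s i) → e ∣ d

section LastVariable

variable (m : ℕ)

/-- The subring of power series in `m+1` variables not depending on the last variable. -/
def indepLast : Subring (MvPowerSeries (Fin (m+1)) F) where
  carrier := {f | ∀ γ : Fin (m+1) →₀ ℕ, γ (Fin.last m) ≠ 0 → coeff γ f = 0}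
  zero_mem' := by intro γ _; simp
  one_mem' := by
    intro γ hγ
    have h : γ ≠ 0 := fun h => hγ (by simp [h])
    simp [MvPowerSeries.coeff_one, h]
  add_mem' := by
    intro f g hf hg γ hγ
    simp [map_add, hf γ hγ, hg γ hγ]
  neg_mem' := by
    intro f hf γ hγ
    simp [hf γ hγ]
  mul_mem' := by
    intro f g hf hg γ hγ
    rw [MvPowerSeries.coeff_mul]
    refine Finset.sum_eq_zero fun p hp => ?_
    have hpsum : p.1 + p.2 = γ := Finset.HasAntidiagonal.mem_antidiagonal.mp hp
    by_cases h1 : p.1 (Fin.last m) = 0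
    · have h2 : p.2 (Fin.last m) ≠ 0 := by
        intro h2
        apply hγ
        rw [← hpsum, Finsupp.add_apply, h1, h2]
      rw [hg p.2 h2, mul_zero]
    · rw [hf p.1 h1, zero_mul]

/-- The ring `A^{m-1}(r)`: analytic functions not depending on the last variable. -/
noncomputable def Aprev (r : ℝ) : Subring (MvPowerSeries (Fin (m+1)) F) :=
  A F (m+1) r ⊓ indepLast F m

lemma Aprev_le (r : ℝ) : Aprev F m r ≤ A F (m+1) r := inf_le_left

lemma X_mem (r : ℝ) {k : ℕ} (i : Fin k) : (X i : MvPowerSeries (Fin k) F) ∈ A F k r := by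
  rw [mem_A_iff]
  refine tendsto_const_nhds.congr' ?_
  refine Filter.eventuallyEq_of_mem
    ((Set.finite_singleton (Finsupp.single i 1)).compl_mem_cofinite) ?_
  intro γ hγ
  have h : γ ≠ Finsupp.single i 1 := by simpa using hγ
  simp [MvPowerSeries.X, MvPowerSeries.coeff_monomial, h]

/-- The last coordinate function `z_m` as an element of `A^m(r)`. -/
noncomputable def zmA (r : ℝ) : A F (m+1) r :=
  ⟨X (Fin.last m), X_mem F r (Fin.last m)⟩

/-- Interpret a polynomial `W ∈ A^{m-1}(r)[z_m]` as an analytic function in `A^m(r)`. -/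
noncomputable def toAm (r : ℝ) (W : Polynomial (Aprev F m r)) : A F (m+1) r :=
  Polynomial.eval₂ (Subring.inclusion (Aprev_le F m r)) (zmA F m r) W

/-- `W ∈ A^{m-1}(r)[z_m]` is a Weierstrass polynomial of degree `n = deg W`:
it is monic and `|W|_r = r^n`. -/
def IsWeierstrass (r : ℝ) (W : Polynomial (Aprev F m r)) : Prop :=
  W.Monic ∧ nrm F r ((toAm F m r W : A F (m+1) r) : MvPowerSeries (Fin (m+1)) F)
    = r ^ W.natDegree

/-- The coefficient `A_j` of `z_m^j` when `f` is written as `Σ_j A_j(z') z_m^j`,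
viewed as a power series not involving the last variable. -/
noncomputable def slice (f : MvPowerSeries (Fin (m+1)) F) (j : ℕ) :
    MvPowerSeries (Fin (m+1)) F :=
  fun γ => if γ (Fin.last m) = 0 then
    coeff (γ + Finsupp.single (Fin.last m) j) f else 0

/-- `f` is `z_m`-distinguished of degree `n` in `A^m(r)`: writing `f = Σ_j A_j z_m^j`,
`A_n` is a unit in `A^{m-1}(r)`, `|f|_r = |A_n|_r r^n`, and `|A_j|_r r^j < |A_n|_r r^n`
for `j > n`. -/
def IsDistinguished (r : ℝ) (f : MvPowerSeries (Fin (m+1)) F) (n : ℕ) : Prop :=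
  (∃ h : slice F m f n ∈ Aprev F m r, IsUnit (⟨slice F m f n, h⟩ : Aprev F m r)) ∧
  nrm F r f = nrm F r (slice F m f n) * r ^ n ∧
  ∀ j : ℕ, n < j → nrm F r (slice F m f j) * r ^ j < nrm F r (slice F m f n) * r ^ n

/-- The linear forms `z_i + u_i z_m` (and `z_m` for `i = m`) defining
the change of variables `σ_u`. -/
noncomputable def linSub (u : Fin m → F) (i : Fin (m+1)) : MvPolynomial (Fin (m+1)) F :=
  MvPolynomial.X i + (if h : (i : ℕ) < m then
    MvPolynomial.C (u ⟨i, h⟩) * MvPolynomial.X (Fin.last m) else 0)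

/-- The composition `f ∘ σ_u`, where
`σ_u(z_1,…,z_m) = (z_1 + u_1 z_m, …, z_{m-1} + u_{m-1} z_m, z_m)`. -/
noncomputable def sigmaSub (u : Fin m → F) (f : MvPowerSeries (Fin (m+1)) F) :
    MvPowerSeries (Fin (m+1)) F :=
  fun δ => ∑ t ∈ Finset.Nat.antidiagonalTuple (m+1) (mdeg δ),
    coeff (Finsupp.equivFunOnFinite.symm t) f *
      MvPolynomial.coeff δ (∏ i, linSub F m u i ^ t i)

end LastVariable

/-- The formal partial derivative `∂f/∂z_j` of a power series. -/
noncomputable def pderiv {m : ℕ} (j : Fin m) (f : MvPowerSeries (Fin m) F) :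
    MvPowerSeries (Fin m) F :=
  fun γ => ((γ j + 1 : ℕ) : F) * coeff (γ + Finsupp.single j 1) f


/-!
Let `γ₀` be an index at which `|a_γ| r^{|γ|}` is maximal, of largest total degree `d` among
the maximisers, and let `c = a_{γ₀}`. The substitution `σ_u` has integral coefficients, so it
does not increase `|a_γ| r^{|γ|}` within a fixed total degree, and the coefficient of `z_m^d`
in `f ∘ σ_u` is `Σ_{|γ| = d} a_γ u^{γ'}` with `γ' = (γ_1, …, γ_{m-1})`. This is `c` times a
unit exactly when the reduction of `Σ_{|γ| = d} (a_γ / c) X^{γ'}`, a non-zero polynomial since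
its coefficient at `γ₀'` is `1`, does not vanish at `ũ`. For such `u` the term `z_m^d` dominates
`f ∘ σ_u`, strictly so against all terms of total degree `> d`. Hence its `z_m`-slice `A_d` has a
dominant constant term and is a unit of `A^{m-1}(r)` by a geometric series, and `f ∘ σ_u` is
`z_m`-distinguished of degree `d` with the Gauss norm of `f`.
-/

lemma mdeg_eq_degree {m : ℕ} (γ : Fin m →₀ ℕ) : mdeg γ = γ.degree := rfl

lemma mdeg_single {m : ℕ} (i : Fin m) (n : ℕ) : mdeg (Finsupp.single i n) = n :=
  Finsupp.degree_single i n

lemma mdeg_eq_zero_iff {m : ℕ} {γ : Fin m →₀ ℕ} : mdeg γ = 0 ↔ γ = 0 :=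
  Finsupp.degree_eq_zero_iff γ

lemma mdeg_equivFunOnFinite_symm {m : ℕ} (t : Fin m → ℕ) :
    mdeg (Finsupp.equivFunOnFinite.symm t) = ∑ i, t i := by
  rw [mdeg_eq_degree, Finsupp.degree_eq_sum]
  rfl

lemma exists_forall_le_lex_of_tendsto {α : Type*} {v : α → ℝ}
    (hv : Tendsto v cofinite (nhds 0)) {a : α} (ha : 0 < v a) (μ : α → ℕ) :
    ∃ a₀, (∀ b, v b ≤ v a₀) ∧ ∀ b, v b = v a₀ → μ b ≤ μ a₀ := by
  have hfin : {b | v a ≤ v b}.Finite := by simpa using hv.eventually (gt_mem_nhds ha)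
  obtain ⟨a₀, ha₀, hmax⟩ :=
    Set.exists_max_image _ (fun b => toLex (v b, μ b)) hfin ⟨a, show v a ≤ v a from le_rfl⟩
  have hle : ∀ b, v b ≤ v a₀ := fun b => by
    by_cases hb : v a ≤ v b
    · rcases Prod.Lex.toLex_le_toLex.1 (hmax b hb) with h | ⟨h, -⟩
      exacts [h.le, h.le]
    · exact (not_le.1 hb).le.trans ha₀
  refine ⟨a₀, hle, fun b hb => ?_⟩
  rcases Prod.Lex.toLex_le_toLex.1 (hmax b (ha₀.trans hb.ge)) with h | ⟨-, h⟩
  exacts [absurd hb h.ne, h]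

lemma exists_lt_forall_le_of_tendsto {α : Type*} {v : α → ℝ}
    (hv : Tendsto v cofinite (nhds 0)) {M : ℝ} (hM : 0 < M) {P : α → Prop}
    (hP : ∀ b, P b → v b < M) : ∃ s < M, ∀ b, P b → v b ≤ s := by
  have hfin : {b | M / 2 ≤ v b}.Finite := by simpa using hv.eventually (gt_mem_nhds (half_pos hM))
  have hT : (insert (M / 2) (v '' {b | P b ∧ M / 2 ≤ v b})).Finite :=
    ((hfin.subset fun b hb => hb.2).image v).insert _
  obtain ⟨s, hsT, hs⟩ := Set.exists_max_image _ id hT ⟨_, Set.mem_insert _ _⟩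
  refine ⟨s, ?_, fun b hb => ?_⟩
  · rcases hsT with rfl | ⟨b, ⟨hb, -⟩, rfl⟩
    exacts [half_lt_self hM, hP b hb]
  · by_cases h : M / 2 ≤ v b
    · exact hs _ (Or.inr ⟨b, ⟨hb, h⟩, rfl⟩)
    · exact (not_le.1 h).le.trans (hs _ (Set.mem_insert _ _))

lemma tendsto_cofinite_of_le_of_mdeg_eq {m : ℕ} {v w : (Fin m →₀ ℕ) → ℝ}
    (hv : Tendsto v cofinite (nhds 0)) (hw : ∀ δ, 0 ≤ w δ)
    (hwv : ∀ δ, ∃ γ, mdeg γ = mdeg δ ∧ w δ ≤ v γ) : Tendsto w cofinite (nhds 0) := by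
  refine tendsto_order.2 ⟨fun a ha => .of_forall fun δ => ha.trans_le (hw δ), fun ε hε => ?_⟩
  have hfin : {γ | ε ≤ v γ}.Finite := by simpa using hv.eventually (gt_mem_nhds hε)
  rw [eventually_cofinite]
  refine (Finsupp.finite_of_degree_le (hfin.toFinset.sup mdeg)).subset fun δ hδ => ?_
  obtain ⟨γ, hγ, hle⟩ := hwv δ
  change δ.degree ≤ _
  rw [← mdeg_eq_degree, ← hγ]
  exact Finset.le_sup (f := mdeg) (hfin.mem_toFinset.2 ((not_lt.1 hδ).trans hle))

lemma coeff_inv_one_sub {σ k : Type*} [Field k] {x : MvPowerSeries σ k}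
    (hx : constantCoeff x = 0) {N : ℕ} {d : σ →₀ ℕ} (hd : d.degree ≤ N) :
    coeff d (1 - x)⁻¹ = ∑ i ∈ Finset.range (N + 1), coeff d (x ^ i) := by
  have hunit : constantCoeff (1 - x) ≠ 0 := by simp [hx]
  have hgeom : ∑ i ∈ Finset.range (N + 1), x ^ i = (1 - x)⁻¹ * (1 - x ^ (N + 1)) := by
    rw [← mul_neg_geom_sum, ← mul_assoc, MvPowerSeries.inv_mul_cancel _ hunit, one_mul]
  rw [← map_sum, hgeom, coeff_mul_left_one_sub_of_lt_order]
  exact (Nat.cast_lt.2 (Nat.lt_succ_of_le hd)).trans_le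
    (le_order_pow_of_constantCoeff_eq_zero _ hx)

section GaussNorm

variable {F}

def termNorm {n : ℕ} (r : ℝ) (f : MvPowerSeries (Fin n) F) (γ : Fin n →₀ ℕ) : ℝ :=
  ‖coeff γ f‖ * r ^ mdeg γ

lemma termNorm_nonneg {n : ℕ} {r : ℝ} (hr : 0 ≤ r) (f : MvPowerSeries (Fin n) F)
    (γ : Fin n →₀ ℕ) : 0 ≤ termNorm r f γ := by
  unfold termNorm; positivity

lemma termNorm_zero {n : ℕ} (r : ℝ) (f : MvPowerSeries (Fin n) F) :
    termNorm r f 0 = ‖constantCoeff f‖ := by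
  rw [termNorm, coeff_zero_eq_constantCoeff_apply, mdeg_eq_zero_iff.2 rfl, pow_zero, mul_one]

lemma mem_A_iff_termNorm {n : ℕ} {r : ℝ} {f : MvPowerSeries (Fin n) F} :
    f ∈ A F n r ↔ Tendsto (termNorm r f) cofinite (nhds 0) := Iff.rfl

lemma nrm_le {n : ℕ} {r B : ℝ} {f : MvPowerSeries (Fin n) F} (h : ∀ γ, termNorm r f γ ≤ B) :
    nrm F r f ≤ B :=
  ciSup_le h

lemma nrm_eq_termNorm {n : ℕ} {r : ℝ} {f : MvPowerSeries (Fin n) F} {γ₀ : Fin n →₀ ℕ}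
    (h : ∀ γ, termNorm r f γ ≤ termNorm r f γ₀) : nrm F r f = termNorm r f γ₀ :=
  le_antisymm (ciSup_le h) (le_ciSup ⟨_, Set.forall_mem_range.2 h⟩ γ₀)

lemma termNorm_mul_le {n : ℕ} {r a b : ℝ} (hr : 0 ≤ r) {f g : MvPowerSeries (Fin n) F}
    (hf : ∀ γ, termNorm r f γ ≤ a) (hg : ∀ γ, termNorm r g γ ≤ b) (γ : Fin n →₀ ℕ) :
    termNorm r (f * g) γ ≤ a * b := by
  obtain ⟨p, hp, hle⟩ := IsUltrametricDist.exists_norm_finsetSum_le_of_nonempty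
    (t := Finset.HasAntidiagonal.antidiagonal γ) ⟨(0, γ), by simp⟩
    fun p : (Fin n →₀ ℕ) × (Fin n →₀ ℕ) => coeff p.1 f * coeff p.2 g
  have hγ : mdeg γ = mdeg p.1 + mdeg p.2 := by
    rw [← mdeg_add, Finset.HasAntidiagonal.mem_antidiagonal.1 hp]
  calc termNorm r (f * g) γ ≤ ‖coeff p.1 f * coeff p.2 g‖ * r ^ mdeg γ := by
        rw [termNorm, coeff_mul]; gcongr
    _ = termNorm r f p.1 * termNorm r g p.2 := by
        rw [norm_mul, hγ, pow_add, termNorm, termNorm]; ring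
    _ ≤ a * b := mul_le_mul (hf _) (hg _) (termNorm_nonneg hr _ _)
        ((termNorm_nonneg hr _ _).trans (hf 0))

lemma termNorm_pow_le {n : ℕ} {r q : ℝ} (hr : 0 ≤ r) {x : MvPowerSeries (Fin n) F}
    (hx : ∀ γ, termNorm r x γ ≤ q) (k : ℕ) (γ : Fin n →₀ ℕ) : termNorm r (x ^ k) γ ≤ q ^ k := by
  induction k generalizing γ with
  | zero =>
    rw [pow_zero, pow_zero, termNorm, coeff_one]
    split_ifs with h
    · rw [h, norm_one, one_mul, mdeg_eq_zero_iff.2 rfl, pow_zero]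
    · rw [norm_zero, zero_mul]; exact zero_le_one
  | succ k ih => rw [pow_succ, pow_succ]; exact termNorm_mul_le hr ih hx γ

lemma mem_A_of_coeff_eq_sum {n : ℕ} {r : ℝ} (hr : 0 ≤ r) {y : ℕ → MvPowerSeries (Fin n) F}
    (hy : ∀ k, y k ∈ A F n r) {b : ℕ → ℝ} (hb : Tendsto b atTop (nhds 0))
    (hyb : ∀ k γ, termNorm r (y k) γ ≤ b k) {h : MvPowerSeries (Fin n) F}
    (hh : ∀ γ, coeff γ h = ∑ k ∈ Finset.range (mdeg γ + 1), coeff γ (y k)) : h ∈ A F n r := by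
  refine tendsto_order.2
    ⟨fun a ha => .of_forall fun γ => ha.trans_le (termNorm_nonneg hr _ _), fun ε hε => ?_⟩
  obtain ⟨K, hK⟩ := eventually_atTop.1 (hb.eventually (gt_mem_nhds hε))
  have hsmall : ∀ᶠ γ in cofinite, ∀ k ∈ Finset.range K, termNorm r (y k) γ < ε :=
    (Filter.eventually_all_finset _).2 fun k _ =>
      (mem_A_iff_termNorm.1 (hy k)).eventually (gt_mem_nhds hε)
  filter_upwards [hsmall] with γ hγ
  obtain ⟨k, -, hle⟩ := IsUltrametricDist.exists_norm_finsetSum_le_of_nonempty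
    Finset.nonempty_range_add_one fun k => coeff γ (y k)
  calc termNorm r h γ ≤ termNorm r (y k) γ := by
        rw [termNorm, termNorm, hh]; gcongr
    _ < ε := by
        by_cases hkK : k < K
        · exact hγ k (Finset.mem_range.2 hkK)
        · exact (hyb k γ).trans_lt (hK k (not_lt.1 hkK))

lemma exists_dominant_index {n : ℕ} {r : ℝ}
    (hr : 0 < r) {f : MvPowerSeries (Fin n) F} (hf : f ∈ A F n r) (hf0 : f ≠ 0) :
    ∃ γ₀ s, coeff γ₀ f ≠ 0 ∧ s < termNorm r f γ₀ ∧ (∀ γ, termNorm r f γ ≤ termNorm r f γ₀) ∧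
      ∀ γ, mdeg γ₀ < mdeg γ → termNorm r f γ ≤ s := by
  obtain ⟨γ₁, hγ₁⟩ : ∃ γ, coeff γ f ≠ 0 := by
    by_contra! h
    exact hf0 (MvPowerSeries.ext h)
  have hpos : 0 < termNorm r f γ₁ := mul_pos (norm_pos_iff.2 hγ₁) (pow_pos hr _)
  obtain ⟨γ₀, hmax, hdeg⟩ := exists_forall_le_lex_of_tendsto (mem_A_iff_termNorm.1 hf) hpos mdeg
  have hpos₀ := hpos.trans_le (hmax γ₁)
  obtain ⟨s, hs, habove⟩ := exists_lt_forall_le_of_tendsto (mem_A_iff_termNorm.1 hf) hpos₀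
    (P := fun γ => mdeg γ₀ < mdeg γ) fun γ hγ => (hmax γ).lt_of_ne fun h => (hdeg γ h).not_gt hγ
  refine ⟨γ₀, s, fun h => ?_, hs, hmax, habove⟩
  rw [termNorm, h, norm_zero, zero_mul] at hpos₀
  exact lt_irrefl 0 hpos₀

end GaussNorm

section LastVariable

variable {F} {m : ℕ}

lemma C_mem_Aprev (r : ℝ) (a : F) : MvPowerSeries.C a ∈ Aprev F m r := by
  refine Subring.mem_inf.2 ⟨?_, fun γ hγ => ?_⟩
  · refine tendsto_const_nhds.congr' (eventuallyEq_of_mem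
      (Set.finite_singleton 0).compl_mem_cofinite fun γ hγ => ?_)
    simp [coeff_C, show γ ≠ 0 from hγ]
  · rw [coeff_C, if_neg (by rintro rfl; exact hγ rfl)]

lemma inv_one_sub_mem_Aprev {r q : ℝ} (hr : 0 ≤ r) {x : MvPowerSeries (Fin (m+1)) F}
    (hx : x ∈ Aprev F m r) (hx0 : constantCoeff x = 0) (hxq : ∀ γ, termNorm r x γ ≤ q)
    (hq : q < 1) : (1 - x)⁻¹ ∈ Aprev F m r := by
  have hcoeff : ∀ γ, coeff γ (1 - x)⁻¹ = ∑ k ∈ Finset.range (mdeg γ + 1), coeff γ (x ^ k) :=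
    fun γ => coeff_inv_one_sub hx0 le_rfl
  have hq0 : 0 ≤ q := (termNorm_nonneg hr _ _).trans (hxq 0)
  refine Subring.mem_inf.2 ⟨mem_A_of_coeff_eq_sum hr (fun k => Aprev_le F m r (pow_mem hx k))
    (tendsto_pow_atTop_nhds_zero_of_lt_one hq0 hq) (termNorm_pow_le hr hxq) hcoeff,
    fun γ hγ => ?_⟩
  rw [hcoeff]
  exact Finset.sum_eq_zero fun k _ => (Subring.mem_inf.1 (pow_mem hx k)).2 γ hγ

/-- Writing `g = c (1 - x)` with `c` its constant term, the bound makes `|x|_r < 1`,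
so that `(1 - x)⁻¹ = Σ xᵏ` converges in `A^{m-1}(r)`. -/
lemma isUnit_of_termNorm_lt {r τ : ℝ} (hr : 0 < r) {g : MvPowerSeries (Fin (m+1)) F}
    (hg : g ∈ Aprev F m r) (hτ : ∀ γ ≠ 0, termNorm r g γ ≤ τ)
    (hτc : τ < ‖constantCoeff g‖) : IsUnit (⟨g, hg⟩ : Aprev F m r) := by
  set c := constantCoeff g
  have hτ0 : 0 ≤ τ :=
    (termNorm_nonneg hr.le _ _).trans (hτ (Finsupp.single 0 1) (by simp))
  have hc : c ≠ 0 := norm_pos_iff.1 (hτ0.trans_lt hτc)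
  set x := 1 - C c⁻¹ * g
  have hgx : g = C c * (1 - x) := by
    rw [sub_sub_cancel, ← mul_assoc, ← map_mul, mul_inv_cancel₀ hc, map_one, one_mul]
  have hx0 : constantCoeff x = 0 := by simp [x, c, inv_mul_cancel₀ hc]
  have hxq : ∀ γ, termNorm r x γ ≤ τ / ‖c‖ := by
    intro γ
    rcases eq_or_ne γ 0 with rfl | hγ
    · simp [termNorm, hx0, div_nonneg hτ0 (norm_nonneg c)]
    · have hxγ : coeff γ x = -(c⁻¹ * coeff γ g) := by simp [x, coeff_one, hγ]
      rw [termNorm, hxγ, norm_neg, norm_mul, norm_inv, mul_assoc, inv_mul_eq_div]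
      exact div_le_div_of_nonneg_right (hτ γ hγ) (norm_nonneg c)
  have hxA : x ∈ Aprev F m r := sub_mem (one_mem _) (mul_mem (C_mem_Aprev r _) hg)
  have hinv := inv_one_sub_mem_Aprev hr.le hxA hx0 hxq ((div_lt_one (hτ0.trans_lt hτc)).2 hτc)
  refine IsUnit.of_mul_eq_one ⟨C c⁻¹ * (1 - x)⁻¹, mul_mem (C_mem_Aprev r _) hinv⟩
    (Subtype.ext ?_)
  change g * (C c⁻¹ * (1 - x)⁻¹) = 1
  have hunit : constantCoeff (1 - x) ≠ 0 := by simp [hx0]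
  rw [hgx, mul_mul_mul_comm, ← map_mul, mul_inv_cancel₀ hc, map_one, one_mul,
    MvPowerSeries.mul_inv_cancel _ hunit]

end LastVariable

section Slices

variable {F} {m : ℕ} {r : ℝ}

lemma termNorm_slice_mul_pow (g : MvPowerSeries (Fin (m+1)) F) (j : ℕ)
    {γ : Fin (m+1) →₀ ℕ} (hγ : γ (Fin.last m) = 0) :
    termNorm r (slice F m g j) γ * r ^ j =
      termNorm r g (γ + Finsupp.single (Fin.last m) j) := by
  change ‖ite _ _ _‖ * _ * _ = _
  rw [if_pos hγ, termNorm, mdeg_add, mdeg_single, pow_add, mul_assoc]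

lemma termNorm_slice_of_ne (g : MvPowerSeries (Fin (m+1)) F) (j : ℕ)
    {γ : Fin (m+1) →₀ ℕ} (hγ : γ (Fin.last m) ≠ 0) : termNorm r (slice F m g j) γ = 0 := by
  change ‖ite _ _ _‖ * _ = _
  rw [if_neg hγ, norm_zero, zero_mul]

lemma termNorm_slice_le (hr : 0 < r) (g : MvPowerSeries (Fin (m+1)) F) (j : ℕ) {B : ℝ}
    (hB : 0 ≤ B)
    (h : ∀ γ, γ (Fin.last m) = 0 → termNorm r g (γ + Finsupp.single (Fin.last m) j) ≤ B)
    (γ : Fin (m+1) →₀ ℕ) : termNorm r (slice F m g j) γ ≤ B / r ^ j := by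
  by_cases hγ : γ (Fin.last m) = 0
  · rw [le_div_iff₀ (by positivity), termNorm_slice_mul_pow g j hγ]
    exact h γ hγ
  · rw [termNorm_slice_of_ne g j hγ]
    positivity

lemma slice_mem_Aprev (hr : 0 < r) {g : MvPowerSeries (Fin (m+1)) F} (hg : g ∈ A F (m+1) r)
    (j : ℕ) : slice F m g j ∈ Aprev F m r := by
  refine Subring.mem_inf.2 ⟨mem_A_iff_termNorm.2 ?_, fun γ hγ => if_neg hγ⟩
  have hshift : Tendsto (fun γ => termNorm r g (γ + Finsupp.single (Fin.last m) j) / r ^ j)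
      cofinite (nhds 0) := by
    simpa only [zero_div, Function.comp_def] using
      ((mem_A_iff_termNorm.1 hg).comp (add_left_injective _).tendsto_cofinite).div_const (r ^ j)
  refine squeeze_zero (termNorm_nonneg hr.le _) (fun γ => ?_) hshift
  by_cases hγ : γ (Fin.last m) = 0
  · rw [le_div_iff₀ (by positivity), termNorm_slice_mul_pow g j hγ]
  · rw [termNorm_slice_of_ne g j hγ]
    exact div_nonneg (termNorm_nonneg hr.le _ _) (by positivity)

lemma isDistinguished_of_termNorm_le (hr : 0 < r) {g : MvPowerSeries (Fin (m+1)) F}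
    (hg : g ∈ A F (m+1) r) {d : ℕ} {s : ℝ}
    (hmax : ∀ δ, termNorm r g δ ≤ termNorm r g (Finsupp.single (Fin.last m) d))
    (hs : s < termNorm r g (Finsupp.single (Fin.last m) d))
    (habove : ∀ δ, d < mdeg δ → termNorm r g δ ≤ s) :
    IsDistinguished F m r g d := by
  set M := termNorm r g (Finsupp.single (Fin.last m) d)
  have hrpow : ∀ j, 0 < r ^ j := fun j => pow_pos hr j
  have hs0 : 0 ≤ s := (termNorm_nonneg hr.le _ _).trans
    (habove (Finsupp.single 0 (d + 1)) (by rw [mdeg_single]; omega))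
  have habove' : ∀ j γ, d < mdeg γ + j → termNorm r g (γ + Finsupp.single (Fin.last m) j) ≤ s :=
    fun j γ h => habove _ (by rwa [mdeg_add, mdeg_single])
  have hlead : termNorm r (slice F m g d) 0 * r ^ d = M := by
    rw [termNorm_slice_mul_pow g d rfl, zero_add]
  have hnd : nrm F r (slice F m g d) * r ^ d = M := by
    rw [nrm_eq_termNorm (γ₀ := 0), hlead]
    intro γ
    rw [← mul_le_mul_iff_of_pos_right (hrpow d), hlead, ← le_div_iff₀ (hrpow d)]
    exact termNorm_slice_le hr g d (termNorm_nonneg hr.le _ _) (fun γ _ => hmax _) γ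
  have hunit : IsUnit (⟨slice F m g d, slice_mem_Aprev hr hg d⟩ : Aprev F m r) := by
    refine isUnit_of_termNorm_lt hr _ (τ := s / r ^ d) (fun γ hγ => ?_) ?_
    · by_cases hγl : γ (Fin.last m) = 0
      · rw [le_div_iff₀ (hrpow d), termNorm_slice_mul_pow g d hγl]
        exact habove' d γ (by have := mt mdeg_eq_zero_iff.1 hγ; omega)
      · rw [termNorm_slice_of_ne g d hγl]
        positivity
    · rw [div_lt_iff₀ (hrpow d), ← termNorm_zero, hlead]
      exact hs
  refine ⟨⟨slice_mem_Aprev hr hg d, hunit⟩, by rw [nrm_eq_termNorm hmax, hnd], fun j hj => ?_⟩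
  calc nrm F r (slice F m g j) * r ^ j ≤ s / r ^ j * r ^ j := by
        gcongr
        exact nrm_le (termNorm_slice_le hr g j hs0 (fun γ _ => habove' j γ (by omega)))
    _ < nrm F r (slice F m g d) * r ^ d := by
        rw [div_mul_cancel₀ _ (hrpow j).ne', hnd]
        exact hs

end Slices

section Substitution

variable {F} {m : ℕ}

lemma coeff_sigmaSub (u : Fin m → F) (f : MvPowerSeries (Fin (m+1)) F) (δ : Fin (m+1) →₀ ℕ) :
    coeff δ (sigmaSub F m u f) = ∑ t ∈ Finset.Nat.antidiagonalTuple (m+1) (mdeg δ),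
      coeff (Finsupp.equivFunOnFinite.symm t) f *
        MvPolynomial.coeff δ (∏ i, linSub F m u i ^ t i) := rfl

lemma linSub_mem_range_map {u : Fin m → F} (hu : ∀ j, ‖u j‖ ≤ 1) (i : Fin (m+1)) :
    linSub F m u i ∈ (MvPolynomial.map (O F).subtype).range := by
  have hX : ∀ k, (MvPolynomial.X k : MvPolynomial (Fin (m+1)) F) ∈
      (MvPolynomial.map (O F).subtype).range := fun k => ⟨MvPolynomial.X k, MvPolynomial.map_X _ _⟩
  refine add_mem (hX i) ?_
  split
  · exact mul_mem ⟨MvPolynomial.C ⟨u _, hu _⟩, MvPolynomial.map_C _ _⟩ (hX _)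
  · exact zero_mem _

lemma termNorm_sigmaSub_le {r : ℝ} (hr : 0 ≤ r) {u : Fin m → F} (hu : ∀ j, ‖u j‖ ≤ 1)
    (f : MvPowerSeries (Fin (m+1)) F) (δ : Fin (m+1) →₀ ℕ) :
    ∃ γ, mdeg γ = mdeg δ ∧ termNorm r (sigmaSub F m u f) δ ≤ termNorm r f γ := by
  have hne : (Finset.Nat.antidiagonalTuple (m+1) (mdeg δ)).Nonempty :=
    ⟨Pi.single (Fin.last m) (mdeg δ), Finset.Nat.mem_antidiagonalTuple.2 (by simp)⟩
  obtain ⟨t, ht, hle⟩ := IsUltrametricDist.exists_norm_finsetSum_le_of_nonempty hne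
    fun t => coeff (Finsupp.equivFunOnFinite.symm t) f *
      MvPolynomial.coeff δ (∏ i, linSub F m u i ^ t i)
  have hmdeg : mdeg (Finsupp.equivFunOnFinite.symm t) = mdeg δ := by
    rw [mdeg_equivFunOnFinite_symm, Finset.Nat.mem_antidiagonalTuple.1 ht]
  refine ⟨_, hmdeg, ?_⟩
  obtain ⟨p, hp⟩ : (∏ i, linSub F m u i ^ t i) ∈ (MvPolynomial.map (O F).subtype).range :=
    prod_mem fun i _ => pow_mem (linSub_mem_range_map hu i) _
  rw [termNorm, termNorm, coeff_sigmaSub, hmdeg]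
  gcongr
  refine hle.trans ?_
  rw [norm_mul, ← hp, MvPolynomial.coeff_map]
  exact mul_le_of_le_one_right (norm_nonneg _) (MvPolynomial.coeff δ p).2

lemma killCompl_linSub (u : Fin m → F) (i : Fin (m+1)) :
    MvPolynomial.killCompl (Function.injective_of_subsingleton fun _ : Unit => Fin.last m)
      (linSub F m u i) = MvPolynomial.C (Fin.snoc (α := fun _ => F) u 1 i) * MvPolynomial.X () := by
  set K := MvPolynomial.killCompl (R := F)
    (Function.injective_of_subsingleton fun _ : Unit => Fin.last m)
  have hlast : K (MvPolynomial.X (Fin.last m)) = MvPolynomial.X () := by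
    rw [← MvPolynomial.rename_X (fun _ : Unit => Fin.last m), MvPolynomial.killCompl_rename_app]
  induction i using Fin.lastCases with
  | last => simp [linSub, hlast]
  | cast j =>
    have hX : K (MvPolynomial.X j.castSucc) = 0 := by
      simp only [K, MvPolynomial.killCompl, MvPolynomial.aeval_X]
      rw [dif_neg]
      rintro ⟨_, h⟩
      exact (Fin.castSucc_lt_last j).ne h.symm
    simp [linSub, hX, hlast]

/-- Killing every variable but `z_m` keeps exactly the coefficients of the powers of `z_m`. -/
lemma coeff_single_last_prod_linSub (u : Fin m → F) (t : Fin (m+1) → ℕ) :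
    MvPolynomial.coeff (Finsupp.single (Fin.last m) (∑ i, t i)) (∏ i, linSub F m u i ^ t i) =
      ∏ j : Fin m, u j ^ t j.castSucc := by
  rw [← Finsupp.mapDomain_single (f := fun _ : Unit => Fin.last m) (a := ()),
    ← MvPolynomial.coeff_killCompl (Function.injective_of_subsingleton _), map_prod]
  simp_rw [map_pow, killCompl_linSub, mul_pow, Finset.prod_mul_distrib, ← map_pow, ← map_prod,
    Finset.prod_pow_eq_pow_sum, MvPolynomial.coeff_C_mul, MvPolynomial.coeff_X_pow]
  rw [if_true, mul_one, Fin.prod_univ_castSucc]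
  simp

lemma coeff_sigmaSub_single (u : Fin m → F) (f : MvPowerSeries (Fin (m+1)) F) (d : ℕ) :
    coeff (Finsupp.single (Fin.last m) d) (sigmaSub F m u f) =
      ∑ t ∈ Finset.Nat.antidiagonalTuple (m+1) d,
        coeff (Finsupp.equivFunOnFinite.symm t) f * ∏ j : Fin m, u j ^ t j.castSucc := by
  rw [coeff_sigmaSub, mdeg_single]
  refine Finset.sum_congr rfl fun t ht => ?_
  rw [← coeff_single_last_prod_linSub, Finset.Nat.mem_antidiagonalTuple.1 ht]

end Substitution

section Residue

variable {F} {m : ℕ}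

lemma eq_of_init_eq_of_mem_antidiagonalTuple {d : ℕ} {t t' : Fin (m+1) → ℕ}
    (ht : t ∈ Finset.Nat.antidiagonalTuple (m+1) d)
    (ht' : t' ∈ Finset.Nat.antidiagonalTuple (m+1) d) (h : Fin.init t = Fin.init t') :
    t = t' := by
  rw [Finset.Nat.mem_antidiagonalTuple, Fin.sum_univ_castSucc] at ht ht'
  have hinit : ∑ i : Fin m, t i.castSucc = ∑ i : Fin m, t' i.castSucc :=
    congrArg (fun s => ∑ i, s i) h
  have hlast : t (Fin.last m) = t' (Fin.last m) := by omega
  rw [← Fin.snoc_init_self t, ← Fin.snoc_init_self t', h, hlast]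

noncomputable def toO (a : F) : O F := if h : ‖a‖ ≤ 1 then ⟨a, h⟩ else 0

lemma coe_toO {a : F} (h : ‖a‖ ≤ 1) : (toO a : F) = a := by rw [toO, dif_pos h]

variable (F) in
noncomputable def residue : O F →+* Res F := Ideal.Quotient.mk (mIdeal F)

lemma red_eq_residue_toO {a : F} (h : ‖a‖ ≤ 1) : red F a h = residue F (toO a) := by
  rw [red, toO, dif_pos h]
  rfl

lemma norm_eq_one_of_residue_ne_zero {a : O F} (h : residue F a ≠ 0) : ‖(a : F)‖ = 1 :=
  le_antisymm a.2 (not_lt.1 fun hlt => h (Ideal.Quotient.eq_zero_iff_mem.2 hlt))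

/-- The reduction of `c⁻¹ · coeff_{z_m^d} (f ∘ σ_u)`, as a polynomial in the reduction of `u`
(see `coeff_sigmaSub_single`). -/
noncomputable def residuePoly (f : MvPowerSeries (Fin (m+1)) F) (c : F) (d : ℕ) :
    MvPolynomial (Fin m) (Res F) :=
  ∑ t ∈ Finset.Nat.antidiagonalTuple (m+1) d,
    MvPolynomial.monomial (Finsupp.equivFunOnFinite.symm (Fin.init t))
      (residue F (toO (coeff (Finsupp.equivFunOnFinite.symm t) f / c)))

lemma eval_residuePoly {u : Fin m → F} (hu : ∀ j, ‖u j‖ ≤ 1)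
    (f : MvPowerSeries (Fin (m+1)) F) (c : F) (d : ℕ) :
    MvPolynomial.eval (fun j => red F (u j) (hu j)) (residuePoly f c d) =
      residue F (∑ t ∈ Finset.Nat.antidiagonalTuple (m+1) d,
        toO (coeff (Finsupp.equivFunOnFinite.symm t) f / c) *
          ∏ j : Fin m, toO (u j) ^ t j.castSucc) := by
  simp only [residuePoly, map_sum, MvPolynomial.eval_monomial, map_mul, map_prod, map_pow,
    red_eq_residue_toO, Finsupp.prod_fintype _ _ (fun _ => pow_zero _)]
  rfl

lemma residuePoly_ne_zero (f : MvPowerSeries (Fin (m+1)) F) {γ₀ : Fin (m+1) →₀ ℕ}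
    (hc : coeff γ₀ f ≠ 0) : residuePoly f (coeff γ₀ f) (mdeg γ₀) ≠ 0 := by
  intro h
  have hmem : ⇑γ₀ ∈ Finset.Nat.antidiagonalTuple (m+1) (mdeg γ₀) := by
    rw [Finset.Nat.mem_antidiagonalTuple, mdeg_eq_degree, Finsupp.degree_eq_sum]
  have hcoeff := congrArg (MvPolynomial.coeff (Finsupp.equivFunOnFinite.symm (Fin.init γ₀))) h
  rw [residuePoly, MvPolynomial.coeff_sum, Finset.sum_eq_single_of_mem _ hmem] at hcoeff
  · rw [MvPolynomial.coeff_monomial, if_pos rfl, Finsupp.equivFunOnFinite_symm_coe, div_self hc,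
      MvPolynomial.coeff_zero] at hcoeff
    have hlt : ‖(toO (1 : F) : F)‖ < 1 := Ideal.Quotient.eq_zero_iff_mem.1 hcoeff
    rw [coe_toO norm_one.le, norm_one] at hlt
    exact lt_irrefl _ hlt
  · intro t ht hne
    rw [MvPolynomial.coeff_monomial, if_neg]
    exact fun heq => hne (eq_of_init_eq_of_mem_antidiagonalTuple ht hmem
      (Finsupp.equivFunOnFinite.symm.injective heq))

lemma norm_coeff_sigmaSub_single {u : Fin m → F} (hu : ∀ j, ‖u j‖ ≤ 1)
    {f : MvPowerSeries (Fin (m+1)) F} {c : F} (hc : c ≠ 0) {d : ℕ}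
    (hf : ∀ γ, mdeg γ = d → ‖coeff γ f‖ ≤ ‖c‖)
    (hres : MvPolynomial.eval (fun j => red F (u j) (hu j)) (residuePoly f c d) ≠ 0) :
    ‖coeff (Finsupp.single (Fin.last m) d) (sigmaSub F m u f)‖ = ‖c‖ := by
  rw [eval_residuePoly] at hres
  have hunit := norm_eq_one_of_residue_ne_zero hres
  have hw : (↑(∑ t ∈ Finset.Nat.antidiagonalTuple (m+1) d,
        toO (coeff (Finsupp.equivFunOnFinite.symm t) f / c) *
          ∏ j : Fin m, toO (u j) ^ t j.castSucc) : F) =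
      coeff (Finsupp.single (Fin.last m) d) (sigmaSub F m u f) / c := by
    rw [coeff_sigmaSub_single, Finset.sum_div]
    push_cast
    refine Finset.sum_congr rfl fun t ht => ?_
    have hft : ‖coeff (Finsupp.equivFunOnFinite.symm t) f / c‖ ≤ 1 := by
      rw [norm_div]
      refine div_le_one_of_le₀ (hf _ ?_) (norm_nonneg c)
      rw [mdeg_equivFunOnFinite_symm, Finset.Nat.mem_antidiagonalTuple.1 ht]
    simp only [coe_toO hft, coe_toO (hu _)]
    ring
  rwa [hw, norm_div, div_eq_one_iff_eq (norm_ne_zero_iff.2 hc)] at hunit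

end Residue

theorem statement8
    (m : ℕ) (r R : ℝ) (hr : r ∈ VG F) (hrR : r ≤ R)
    (f : MvPowerSeries (Fin (m+1)) F) (hf : f ∈ A F (m+1) R) (hf0 : f ≠ 0) :
    ∃ φ : MvPolynomial (Fin m) (Res F), φ ≠ 0 ∧
      ∀ (u : Fin m → F) (hu : ∀ j, ‖u j‖ ≤ 1),
        MvPolynomial.eval (fun j => red F (u j) (hu j)) φ ≠ 0 →
        sigmaSub F m u f ∈ A F (m+1) r ∧
        (∃ n : ℕ, IsDistinguished F m r (sigmaSub F m u f) n) ∧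
        nrm F r (sigmaSub F m u f) = nrm F r f := by
  have hr0 := VG.pos F hr
  have hfr := A_mono F hr0 hrR hf
  obtain ⟨γ₀, s, hc, hs, hmax, habove⟩ := exists_dominant_index hr0 hfr hf0
  refine ⟨residuePoly f (coeff γ₀ f) (mdeg γ₀), residuePoly_ne_zero f hc, fun u hu hres => ?_⟩
  have hcoeff : ∀ γ, mdeg γ = mdeg γ₀ → ‖coeff γ f‖ ≤ ‖coeff γ₀ f‖ := fun γ hγ => by
    have := hmax γ
    rw [termNorm, termNorm, hγ] at this
    exact le_of_mul_le_mul_right this (pow_pos hr0 _)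
  have hlead : termNorm r (sigmaSub F m u f) (Finsupp.single (Fin.last m) (mdeg γ₀)) =
      termNorm r f γ₀ := by
    rw [termNorm, termNorm, norm_coeff_sigmaSub_single hu hc hcoeff hres, mdeg_single]
  have hσ := termNorm_sigmaSub_le hr0.le hu f
  have hσA : sigmaSub F m u f ∈ A F (m+1) r :=
    tendsto_cofinite_of_le_of_mdeg_eq hfr (termNorm_nonneg hr0.le _) hσ
  have hσmax : ∀ δ, termNorm r (sigmaSub F m u f) δ ≤
      termNorm r (sigmaSub F m u f) (Finsupp.single (Fin.last m) (mdeg γ₀)) := fun δ => by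
    obtain ⟨γ, -, hle⟩ := hσ δ
    exact hle.trans ((hmax γ).trans hlead.ge)
  have hσabove : ∀ δ, mdeg γ₀ < mdeg δ → termNorm r (sigmaSub F m u f) δ ≤ s := fun δ hδ => by
    obtain ⟨γ, hγ, hle⟩ := hσ δ
    exact hle.trans (habove γ (hγ ▸ hδ))
  refine ⟨hσA, ⟨mdeg γ₀, isDistinguished_of_termNorm_le hr0 hσA hσmax (hs.trans_eq hlead.symm)
    hσabove⟩, ?_⟩
  rw [nrm_eq_termNorm hσmax, nrm_eq_termNorm hmax, hlead]

end NA
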